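/- Assume Υ(k) ≥ 20. Then for any distinct i, j ∈ [k], ‖p^(i) − p^(j)‖² ≥ (1/min(vol(S_i), vol(S_j)))·(1/2 − 8/Υ(k)). -/

import Mathlib

open Finset
open scoped RealInnerProductSpace

/-- The volume of a vertex set: the sum of the degrees of its vertices. -/
noncomputable def gVol {V : Type*} (deg : V → ℝ) (S : Finset V) : ℝ := ∑ u ∈ S, deg u

/-- The total edge weight between two vertex sets. -/
noncomputable def gCut {V : Type*} (w : V → V → ℝ) (A B : Finset V) : ℝ :=
  ∑ u ∈ A, ∑ v ∈ B, w u v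

/-- The conductance of a vertex set. -/
noncomputable def gCond {V : Type*} [Fintype V] [DecidableEq V]
    (w : V → V → ℝ) (deg : V → ℝ) (S : Finset V) : ℝ :=
  gCut w S Sᶜ / min (gVol deg S) (gVol deg Sᶜ)

/-- `S : Fin k → Finset V` is a partition of `V` into `k` non-empty sets. -/
def IsPartition {V : Type*} [Fintype V] {k : ℕ} (S : Fin k → Finset V) : Prop :=
  (∀ i, (S i).Nonempty) ∧ (∀ i j, i ≠ j → Disjoint (S i) (S j)) ∧ ∀ v, ∃ i, v ∈ S i

/-- The vector `D^{1/2} χ_S`. -/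
noncomputable def indVec {n : ℕ} (deg : Fin n → ℝ) (S : Finset (Fin n)) :
    EuclideanSpace ℝ (Fin n) :=
  WithLp.toLp 2 (fun v => if v ∈ S then Real.sqrt (deg v) else 0)

/-- The normalised indicator vector `D^{1/2} χ_S / ‖D^{1/2} χ_S‖` of a cluster `S`. -/
noncomputable def gbarVec {n : ℕ} (deg : Fin n → ℝ) (S : Finset (Fin n)) :
    EuclideanSpace ℝ (Fin n) :=
  ‖indVec deg S‖⁻¹ • indVec deg S

/-! The Rayleigh quotient of the normalised indicator vector `ḡ_i` is `w(S_i, V ∖ S_i) / vol(S_i)`,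
which is at most `ρ(k)`. Since `N` is positive semidefinite, expanding `ḡ_i` in the eigenbasis
shows that its component outside `span {f_1, …, f_k}` has squared norm at most
`ρ(k) / λ_{k+1} = 1 / Υ(k)`. Now `p^(i) - p^(j)` lists the first `k` eigen-coordinates of
`y = ḡ_i / √vol(S_i) - ḡ_j / √vol(S_j)`, and `‖y‖² = 1 / vol(S_i) + 1 / vol(S_j)` because the
clusters are disjoint; the discarded coordinates carry at most `2 / Υ(k)` of this, so
`‖p^(i) - p^(j)‖² ≥ (1 / vol(S_i) + 1 / vol(S_j)) (1 - 2 / Υ(k))`. -/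

open Matrix

theorem laplacian_form_eq_half_sum_sq {V : Type*} [Fintype V] {w : V → V → ℝ} {deg : V → ℝ}
    (hsymm : ∀ u v, w u v = w v u) (hdeg : ∀ u, deg u = ∑ v, w u v) (z : V → ℝ) :
    ∑ u, deg u * z u ^ 2 - ∑ u, ∑ v, w u v * z u * z v =
      (∑ u, ∑ v, w u v * (z u - z v) ^ 2) / 2 := by
  have hleft : ∑ u, deg u * z u ^ 2 = ∑ u, ∑ v, w u v * z u ^ 2 := by
    simp_rw [hdeg, sum_mul]
  have hright : ∑ u, ∑ v, w u v * z v ^ 2 = ∑ u, deg u * z u ^ 2 := by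
    rw [sum_comm]
    simp_rw [hdeg, sum_mul, hsymm]
  have hexpand : ∑ u, ∑ v, w u v * (z u - z v) ^ 2 =
      ∑ u, ∑ v, w u v * z u ^ 2 + ∑ u, ∑ v, w u v * z v ^ 2
        - 2 * ∑ u, ∑ v, w u v * z u * z v := by
    simp only [mul_sum, ← sum_add_distrib, ← sum_sub_distrib]
    exact sum_congr rfl fun u _ => sum_congr rfl fun v _ => by ring
  rw [hexpand, hright, ← hleft]
  ring

noncomputable def normLap {V : Type*} [Fintype V] [DecidableEq V] (w : V → V → ℝ)
    (deg : V → ℝ) : Matrix V V ℝ :=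
  1 - Matrix.of fun u v => w u v / (√(deg u) * √(deg v))

section NormalizedLaplacian

variable {V : Type*} [Fintype V] [DecidableEq V] {w : V → V → ℝ} {deg : V → ℝ}

theorem dotProduct_normLap_mulVec (hdeg_pos : ∀ u, 0 < deg u) (z : V → ℝ) :
    (fun u => √(deg u) * z u) ⬝ᵥ normLap w deg *ᵥ (fun u => √(deg u) * z u) =
      ∑ u, deg u * z u ^ 2 - ∑ u, ∑ v, w u v * z u * z v := by
  have hsqrt : ∀ u, √(deg u) ≠ 0 := fun u => (Real.sqrt_pos.2 (hdeg_pos u)).ne'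
  rw [normLap, sub_mulVec, one_mulVec, dotProduct_sub]
  congr 1
  · refine sum_congr rfl fun u _ => ?_
    rw [mul_mul_mul_comm, Real.mul_self_sqrt (hdeg_pos u).le, sq]
  · simp only [dotProduct, mulVec, of_apply, mul_sum]
    refine sum_congr rfl fun u _ => sum_congr rfl fun v _ => ?_
    field_simp [hsqrt u, hsqrt v]

theorem dotProduct_normLap_mulVec_nonneg (hsymm : ∀ u v, w u v = w v u)
    (hw : ∀ u v, 0 ≤ w u v) (hdeg : ∀ u, deg u = ∑ v, w u v) (hdeg_pos : ∀ u, 0 < deg u)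
    (x : V → ℝ) : 0 ≤ x ⬝ᵥ normLap w deg *ᵥ x := by
  have hx : x = fun u => √(deg u) * (x u / √(deg u)) := by
    funext u
    rw [mul_div_cancel₀ _ (Real.sqrt_pos.2 (hdeg_pos u)).ne']
  rw [hx, dotProduct_normLap_mulVec hdeg_pos, laplacian_form_eq_half_sum_sq hsymm hdeg]
  exact div_nonneg (sum_nonneg fun u _ => sum_nonneg fun v _ =>
    mul_nonneg (hw u v) (sq_nonneg _)) zero_le_two

end NormalizedLaplacian

theorem Matrix.nonneg_of_mulVec_eq_smul {V : Type*} [Fintype V] {M : Matrix V V ℝ}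
    (hM : ∀ x, 0 ≤ x ⬝ᵥ M *ᵥ x) {x : V → ℝ} (hx : x ≠ 0) {μ : ℝ} (h : M *ᵥ x = μ • x) :
    0 ≤ μ := by
  have hμ := hM x
  rw [h, dotProduct_smul, smul_eq_mul] at hμ
  have hxx : 0 < x ⬝ᵥ x := (sum_nonneg fun u _ => mul_self_nonneg (x u)).lt_of_ne
    (Ne.symm (mt dotProduct_self_eq_zero.1 hx))
  exact nonneg_of_mul_nonneg_left hμ hxx

section Spectral

variable {V ι : Type*} [Fintype V] [Fintype ι] {M : Matrix V V ℝ} {μ : ι → ℝ}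
  (b : OrthonormalBasis ι ℝ (EuclideanSpace ℝ V)) (hb : ∀ l, M *ᵥ b l = μ l • b l)
include hb

theorem dotProduct_mulVec_eq_sum_mul_inner_sq (x : EuclideanSpace ℝ V) :
    x ⬝ᵥ M *ᵥ x = ∑ l, μ l * ⟪b l, x⟫ ^ 2 := by
  nth_rw 2 [← b.sum_repr' x]
  simp only [WithLp.ofLp_sum, WithLp.ofLp_smul, mulVec_sum, mulVec_smul, hb, dotProduct_sum,
    dotProduct_smul, smul_eq_mul]
  refine sum_congr rfl fun l _ => ?_
  rw [EuclideanSpace.inner_eq_star_dotProduct, star_trivial]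
  ring

theorem mul_sum_Ici_inner_sq_le [LinearOrder ι] [LocallyFiniteOrderTop ι] (hμ : Monotone μ)
    (hμ_nonneg : ∀ l, 0 ≤ μ l) (m : ι) (x : EuclideanSpace ℝ V) :
    μ m * ∑ l ∈ Ici m, ⟪b l, x⟫ ^ 2 ≤ x ⬝ᵥ M *ᵥ x := by
  rw [dotProduct_mulVec_eq_sum_mul_inner_sq b hb, mul_sum]
  calc ∑ l ∈ Ici m, μ m * ⟪b l, x⟫ ^ 2 ≤ ∑ l ∈ Ici m, μ l * ⟪b l, x⟫ ^ 2 :=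
        sum_le_sum fun l hl => mul_le_mul_of_nonneg_right (hμ (mem_Ici.1 hl)) (sq_nonneg _)
    _ ≤ ∑ l, μ l * ⟪b l, x⟫ ^ 2 :=
        sum_le_sum_of_subset_of_nonneg (subset_univ _)
          fun l _ _ => mul_nonneg (hμ_nonneg l) (sq_nonneg _)

end Spectral

theorem Fin.sum_castLE_add_sum_Ici {M : Type*} [AddCommMonoid M] {k n : ℕ} (h : k < n)
    (g : Fin n → M) :
    ∑ j : Fin k, g (j.castLE h.le) + ∑ l ∈ Ici ⟨k, h⟩, g l = ∑ l, g l := by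
  have hhead : univ.map (Fin.castLEEmb h.le) = Iio ⟨k, h⟩ := by
    ext l
    simp only [mem_map, mem_univ, true_and, mem_Iio, Fin.lt_def]
    exact ⟨fun ⟨j, hj⟩ => hj ▸ j.isLt, fun hl => ⟨⟨l, hl⟩, rfl⟩⟩
  rw [← sum_filter_add_sum_filter_not univ (· < (⟨k, h⟩ : Fin n))]
  simp only [not_lt, filter_gt_eq_Iio, filter_le_eq_Ici, ← hhead, sum_map]
  rfl

section Indicator

variable {n : ℕ} {deg : Fin n → ℝ}

theorem ofLp_indVec (deg : Fin n → ℝ) (S : Finset (Fin n)) :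
    (indVec deg S).ofLp = fun u => √(deg u) * if u ∈ S then 1 else 0 := by
  funext u
  simp [indVec]

theorem norm_indVec_sq (hdeg : ∀ u, 0 ≤ deg u) (S : Finset (Fin n)) :
    ‖indVec deg S‖ ^ 2 = gVol deg S := by
  simp only [EuclideanSpace.norm_sq_eq, ofLp_indVec, Real.norm_eq_abs, sq_abs,
    Real.sq_sqrt (hdeg _), ite_pow, zero_pow two_ne_zero, mul_ite, mul_one, mul_zero]
  rw [sum_ite_mem, univ_inter, gVol]

theorem inner_indVec_eq_zero {S T : Finset (Fin n)} (h : Disjoint S T) :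
    ⟪indVec deg S, indVec deg T⟫ = 0 := by
  rw [EuclideanSpace.inner_eq_star_dotProduct, star_trivial, ofLp_indVec, ofLp_indVec]
  refine sum_eq_zero fun u _ => ?_
  by_cases hu : u ∈ S
  · simp [disjoint_left.1 h hu]
  · simp [hu]

theorem gbarVec_eq (hdeg : ∀ u, 0 ≤ deg u) (S : Finset (Fin n)) :
    gbarVec deg S = (√(gVol deg S))⁻¹ • indVec deg S := by
  rw [gbarVec, ← norm_indVec_sq hdeg, Real.sqrt_sq (norm_nonneg _)]

theorem indVec_dotProduct_normLap_mulVec {w : Fin n → Fin n → ℝ}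
    (hdeg : ∀ u, deg u = ∑ v, w u v) (hdeg_pos : ∀ u, 0 < deg u) (S : Finset (Fin n)) :
    indVec deg S ⬝ᵥ normLap w deg *ᵥ indVec deg S = gCut w S Sᶜ := by
  rw [ofLp_indVec, dotProduct_normLap_mulVec hdeg_pos]
  simp only [ite_pow, one_pow, zero_pow two_ne_zero, mul_ite, mul_one, mul_zero, sum_ite_mem,
    univ_inter, sum_ite_irrel, sum_const_zero]
  rw [gCut, ← sum_sub_distrib]
  refine sum_congr rfl fun u _ => ?_
  rw [hdeg, ← sum_add_sum_compl S]
  ring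

end Indicator

theorem gVol_pos {V : Type*} {deg : V → ℝ} (hdeg_pos : ∀ u, 0 < deg u) {S : Finset V}
    (hS : S.Nonempty) : 0 < gVol deg S :=
  sum_pos (fun u _ => hdeg_pos u) hS

section Conductance

variable {V : Type*} [Fintype V] [DecidableEq V] {w : V → V → ℝ} {deg : V → ℝ}

theorem gCut_le_gVol_mul_gCond (hw : ∀ u v, 0 ≤ w u v) {S : Finset V} (hS : 0 < gVol deg S)
    (hSc : 0 < gVol deg Sᶜ) : gCut w S Sᶜ ≤ gVol deg S * gCond w deg S := by
  have hcut : 0 ≤ gCut w S Sᶜ := sum_nonneg fun u _ => sum_nonneg fun v _ => hw u v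
  rw [gCond, ← div_le_iff₀' hS]
  exact div_le_div_of_nonneg_left hcut (lt_min hS hSc) (min_le_left _ _)

theorem IsPartition.gCut_le_gVol_mul_iSup_gCond {k : ℕ} {S : Fin k → Finset V}
    (hS : IsPartition S) (hw : ∀ u v, 0 ≤ w u v) (hdeg_pos : ∀ u, 0 < deg u) {i j : Fin k}
    (hij : i ≠ j) : gCut w (S i) (S i)ᶜ ≤ gVol deg (S i) * ⨆ m, gCond w deg (S m) := by
  have hSc : 0 < gVol deg (S i)ᶜ := by
    obtain ⟨u, hu⟩ := hS.1 j
    exact gVol_pos hdeg_pos ⟨u, mem_compl.2 fun hui => disjoint_left.1 (hS.2.1 i j hij) hui hu⟩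
  have hS_pos := gVol_pos hdeg_pos (hS.1 i)
  refine (gCut_le_gVol_mul_gCond hw hS_pos hSc).trans (mul_le_mul_of_nonneg_left ?_ hS_pos.le)
  exact le_ciSup (Set.finite_range fun m => gCond w deg (S m)).bddAbove i

end Conductance

section InnerProduct

variable {ι E : Type*} [NormedAddCommGroup E] [InnerProductSpace ℝ E]

theorem norm_smul_sub_smul_sq_of_inner_eq_zero {x y : E} (h : ⟪x, y⟫ = 0) (a c : ℝ) :
    ‖a • x - c • y‖ ^ 2 = a ^ 2 * ‖x‖ ^ 2 + c ^ 2 * ‖y‖ ^ 2 := by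
  rw [norm_sub_sq_real, inner_smul_left, inner_smul_right, h, norm_smul, norm_smul,
    Real.norm_eq_abs, Real.norm_eq_abs, mul_pow, mul_pow, sq_abs, sq_abs]
  simp

theorem sum_inner_smul_sub_smul_sq_le (e : ι → E) (s : Finset ι) (x y : E) (a c : ℝ) :
    ∑ l ∈ s, ⟪e l, a • x - c • y⟫ ^ 2 ≤
      2 * a ^ 2 * ∑ l ∈ s, ⟪e l, x⟫ ^ 2 + 2 * c ^ 2 * ∑ l ∈ s, ⟪e l, y⟫ ^ 2 := by
  rw [mul_sum, mul_sum, ← sum_add_distrib]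
  refine sum_le_sum fun l _ => ?_
  rw [inner_sub_right, inner_smul_right, inner_smul_right]
  nlinarith [sq_nonneg (a * ⟪e l, x⟫ + c * ⟪e l, y⟫)]

theorem le_norm_sq_sub_sum_inner_sq (e : ι → E) (T : Finset ι) {x y : E} (hxy : ⟪x, y⟫ = 0)
    {a c t : ℝ} (hxa : ‖x‖ ^ 2 = a) (hyc : ‖y‖ ^ 2 = c) (ha : 0 < a) (hc : 0 < c)
    (hx : ∑ l ∈ T, ⟪e l, x⟫ ^ 2 ≤ a * t) (hy : ∑ l ∈ T, ⟪e l, y⟫ ^ 2 ≤ c * t) :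
    (1 / a + 1 / c) * (1 - 2 * t) ≤
      ‖a⁻¹ • x - c⁻¹ • y‖ ^ 2 - ∑ l ∈ T, ⟪e l, a⁻¹ • x - c⁻¹ • y⟫ ^ 2 := by
  have htail := sum_inner_smul_sub_smul_sq_le e T x y a⁻¹ c⁻¹
  have hx' := mul_le_mul_of_nonneg_left hx (by positivity : (0 : ℝ) ≤ 2 * a⁻¹ ^ 2)
  have hy' := mul_le_mul_of_nonneg_left hy (by positivity : (0 : ℝ) ≤ 2 * c⁻¹ ^ 2)
  have hnorm : ‖a⁻¹ • x - c⁻¹ • y‖ ^ 2 = 1 / a + 1 / c := by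
    rw [norm_smul_sub_smul_sq_of_inner_eq_zero hxy, hxa, hyc]
    field_simp
  have ha' : 2 * a⁻¹ ^ 2 * (a * t) = 2 * t * (1 / a) := by field_simp
  have hc' : 2 * c⁻¹ ^ 2 * (c * t) = 2 * t * (1 / c) := by field_simp
  rw [hnorm]
  linarith

end InnerProduct

theorem inner_gbarVec_div_sqrt {n : ℕ} {deg : Fin n → ℝ} (hdeg : ∀ u, 0 ≤ deg u)
    (S : Finset (Fin n)) (x : EuclideanSpace ℝ (Fin n)) :
    ⟪x, gbarVec deg S⟫ / √(gVol deg S) = ⟪x, (gVol deg S)⁻¹ • indVec deg S⟫ := by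
  have hvol : 0 ≤ gVol deg S := sum_nonneg fun u _ => hdeg u
  rw [gbarVec_eq hdeg, inner_smul_right, inner_smul_right, ← Real.sqrt_inv, div_eq_mul_inv,
    ← Real.sqrt_inv, mul_right_comm, Real.mul_self_sqrt (inv_nonneg.2 hvol)]

theorem one_div_min_mul_le {a b U : ℝ} (ha : 0 < a) (hb : 0 < b) (hU : 2 ≤ U) :
    1 / min a b * (1 / 2 - 8 / U) ≤ (1 / a + 1 / b) * (1 - 2 * U⁻¹) := by
  have hmin : 1 / min a b ≤ 1 / a + 1 / b := by
    rcases min_choice a b with h | h <;> rw [h] <;> linarith [one_div_pos.2 ha, one_div_pos.2 hb]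
  have hU' : 2 / U ≤ 1 := (div_le_one (by linarith)).2 hU
  have hU0 : 0 ≤ 2 / U := div_nonneg (by norm_num) (by linarith)
  have h8 : 8 / U = 4 * (2 / U) := by ring
  rw [← div_eq_mul_inv]
  calc 1 / min a b * (1 / 2 - 8 / U) ≤ 1 / min a b * (1 - 2 / U) :=
        mul_le_mul_of_nonneg_left (by linarith) (one_div_pos.2 (lt_min ha hb)).le
    _ ≤ (1 / a + 1 / b) * (1 - 2 / U) := mul_le_mul_of_nonneg_right hmin (by linarith)

theorem centre_distance_general
    {n k : ℕ} (hkn : k < n)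
    (w : Fin n → Fin n → ℝ)
    (hsymm : ∀ u v, w u v = w v u)
    (hnonneg : ∀ u v, 0 ≤ w u v)
    (deg : Fin n → ℝ) (hdeg : ∀ u, deg u = ∑ v, w u v)
    (hdegpos : ∀ u, 0 < deg u)
    -- the normalised Laplacian `N = I - D^{-1/2} A D^{-1/2}`
    (N : Matrix (Fin n) (Fin n) ℝ)
    (hN : ∀ u v, N u v =
      (if u = v then (1 : ℝ) else 0) - w u v / (Real.sqrt (deg u) * Real.sqrt (deg v)))
    -- its eigenvalues `lam 0 ≤ … ≤ lam (n-1)` with orthonormal eigenvectors `f`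
    (lam : Fin n → ℝ) (hlam : Monotone lam)
    (f : Fin n → EuclideanSpace ℝ (Fin n))
    (hf : Orthonormal ℝ f)
    (heig : ∀ i, N.mulVec (f i) = lam i • (f i))
    -- `S` is a partition attaining the `k`-way expansion `ρ(k)`
    (S : Fin k → Finset (Fin n)) (hS : IsPartition S)
    (rho : ℝ)
    (hrho : rho = ⨆ i, gCond w deg (S i))
    (hlampos : 0 < lam ⟨k, hkn⟩)
    -- `Υ(k) = λ_{k+1} / ρ(k)`
    (Upsilon : ℝ) (hU : Upsilon = lam ⟨k, hkn⟩ / rho)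
    -- the normalised indicator vectors of the clusters
    (gbar : Fin k → EuclideanSpace ℝ (Fin n))
    (hgbar : ∀ i, gbar i = gbarVec deg (S i))
    -- the approximate cluster centres `p^(i)(j) = ⟨f_j, ḡ_i⟩ / √vol(S_i)`
    (p : Fin k → EuclideanSpace ℝ (Fin k))
    (hp : ∀ i j, p i j = ⟪f (Fin.castLE hkn.le j), gbar i⟫ / Real.sqrt (gVol deg (S i)))
    (hU20 : 20 ≤ Upsilon) :
    ∀ i j : Fin k, i ≠ j →
      (1 / min (gVol deg (S i)) (gVol deg (S j))) * (1 / 2 - 8 / Upsilon) ≤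
        ‖p i - p j‖ ^ 2 := by
  intro i j hij
  obtain rfl : N = normLap w deg := by
    ext u v
    rw [hN, normLap, Matrix.sub_apply, one_apply, of_apply]
  obtain ⟨b, rfl⟩ : ∃ b : OrthonormalBasis (Fin n) ℝ (EuclideanSpace ℝ (Fin n)), ⇑b = f :=
    ⟨.mk hf (hf.linearIndependent.span_eq_top_of_card_eq_finrank' (by simp)).ge,
      OrthonormalBasis.coe_mk _ _⟩
  have hlam_nonneg : ∀ l, 0 ≤ lam l := fun l =>
    nonneg_of_mulVec_eq_smul (dotProduct_normLap_mulVec_nonneg hsymm hnonneg hdeg hdegpos)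
      (by simpa using b.orthonormal.ne_zero l) (heig l)
  have hdeg_nonneg : ∀ u, 0 ≤ deg u := fun u => (hdegpos u).le
  have hvol : ∀ m, 0 < gVol deg (S m) := fun m => gVol_pos hdegpos (hS.1 m)
  have htail : ∀ {m m'}, m ≠ m' →
      ∑ l ∈ Ici ⟨k, hkn⟩, ⟪b l, indVec deg (S m)⟫ ^ 2 ≤ gVol deg (S m) * Upsilon⁻¹ := by
    intro m m' hm
    have hquad := (mul_sum_Ici_inner_sq_le b heig hlam hlam_nonneg ⟨k, hkn⟩ _).trans
      ((indVec_dotProduct_normLap_mulVec hdeg hdegpos (S m)).trans_le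
        (hS.gCut_le_gVol_mul_iSup_gCond hnonneg hdegpos hm))
    rw [← hrho] at hquad
    rw [hU, inv_div, ← mul_div_assoc, le_div_iff₀ hlampos]
    linarith [hquad]
  have hhead : ‖p i - p j‖ ^ 2 = ∑ l : Fin k, ⟪b (l.castLE hkn.le),
      (gVol deg (S i))⁻¹ • indVec deg (S i) - (gVol deg (S j))⁻¹ • indVec deg (S j)⟫ ^ 2 := by
    refine (EuclideanSpace.norm_sq_eq _).trans (sum_congr rfl fun l _ => ?_)
    rw [Real.norm_eq_abs, sq_abs, PiLp.sub_apply, hp, hp, hgbar, hgbar,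
      inner_gbarVec_div_sqrt hdeg_nonneg, inner_gbarVec_div_sqrt hdeg_nonneg, ← inner_sub_right]
  have hsep := le_norm_sq_sub_sum_inner_sq b (Ici ⟨k, hkn⟩)
    (inner_indVec_eq_zero (hS.2.1 i j hij)) (norm_indVec_sq hdeg_nonneg _)
    (norm_indVec_sq hdeg_nonneg _) (hvol i) (hvol j) (htail hij) (htail hij.symm)
  rw [← b.sum_sq_inner_right, ← Fin.sum_castLE_add_sum_Ici hkn, add_sub_cancel_right,
    ← hhead] at hsep
  exact (one_div_min_mul_le (hvol i) (hvol j) (by linarith)).trans hsep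

/-- Approximate centres are far apart (Lemma 4.8). -/
theorem centre_distance
    {n k : ℕ} (hk : 0 < k) (hkn : k < n)
    (w : Fin n → Fin n → ℝ)
    (hsymm : ∀ u v, w u v = w v u)
    (hnonneg : ∀ u v, 0 ≤ w u v)
    (deg : Fin n → ℝ) (hdeg : ∀ u, deg u = ∑ v, w u v)
    (hdegpos : ∀ u, 0 < deg u)
    -- the normalised Laplacian `N = I - D^{-1/2} A D^{-1/2}`
    (N : Matrix (Fin n) (Fin n) ℝ)
    (hN : ∀ u v, N u v =
      (if u = v then (1 : ℝ) else 0) - w u v / (Real.sqrt (deg u) * Real.sqrt (deg v)))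
    -- its eigenvalues `lam 0 ≤ … ≤ lam (n-1)` with orthonormal eigenvectors `f`
    (lam : Fin n → ℝ) (hlam : Monotone lam)
    (f : Fin n → EuclideanSpace ℝ (Fin n))
    (hf : Orthonormal ℝ f)
    (heig : ∀ i, N.mulVec (f i) = lam i • (f i))
    -- `S` is a partition attaining the `k`-way expansion `ρ(k)`
    (S : Fin k → Finset (Fin n)) (hS : IsPartition S)
    (rho : ℝ)
    (hrho : rho = ⨆ i, gCond w deg (S i))
    (hopt : ∀ T : Fin k → Finset (Fin n), IsPartition T → rho ≤ ⨆ i, gCond w deg (T i))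
    (hrhopos : 0 < rho)
    (hlampos : 0 < lam ⟨k, hkn⟩)
    -- `Υ(k) = λ_{k+1} / ρ(k)`
    (Upsilon : ℝ) (hU : Upsilon = lam ⟨k, hkn⟩ / rho)
    -- the normalised indicator vectors of the clusters
    (gbar : Fin k → EuclideanSpace ℝ (Fin n))
    (hgbar : ∀ i, gbar i = gbarVec deg (S i))
    -- the approximate cluster centres `p^(i)(j) = ⟨f_j, ḡ_i⟩ / √vol(S_i)`
    (p : Fin k → EuclideanSpace ℝ (Fin k))
    (hp : ∀ i j, p i j = ⟪f (Fin.castLE hkn.le j), gbar i⟫ / Real.sqrt (gVol deg (S i)))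
    (hU20 : 20 ≤ Upsilon) :
    ∀ i j : Fin k, i ≠ j →
      (1 / min (gVol deg (S i)) (gVol deg (S j))) * (1 / 2 - 8 / Upsilon) ≤
        ‖p i - p j‖ ^ 2 :=
  centre_distance_general hkn w hsymm hnonneg deg hdeg hdegpos N hN lam hlam f hf heig S hS rho hrho
    hlampos Upsilon hU gbar hgbar p hp hU20
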